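/- arXiv:1507.03410 — 4 statements merged into one kernel-verified Lean document; each statement's English description precedes it below -/
import Mathlib

section
/- Let λ > 0 be real, and define O(λ) = {(m,n) ∈ ℕ₀² : m ≥ n, m² + n² < λ, m ≢ n (mod 2)} and E(λ) = {(m,n) ∈ ℕ₀² : m ≥ n, m² + n² < λ, m ≡ n (mod 2)}, and define the right boundary ∂Q(λ) = {(m,n) : m ≥ n, m² + n² < λ, (m+1)² + n² ≥ λ or m+1 < n}. Then the map B(p,q) = (p−1, q) is a bijection from O(λ) onto E(λ) \ (∂Q(λ) ∩ E(λ)); hence |O(λ)| = |E(λ)| − |∂Q(λ) ∩ E(λ)|. -/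
theorem stmt7 (lam : ℝ) (hlam : 0 < lam)
    (O E B : Set (ℕ × ℕ))
    (hO : O = {p : ℕ × ℕ | p.2 ≤ p.1 ∧ (p.1 : ℝ) ^ 2 + (p.2 : ℝ) ^ 2 < lam ∧
        p.1 % 2 ≠ p.2 % 2})
    (hE : E = {p : ℕ × ℕ | p.2 ≤ p.1 ∧ (p.1 : ℝ) ^ 2 + (p.2 : ℝ) ^ 2 < lam ∧
        p.1 % 2 = p.2 % 2})
    (hB : B = {p : ℕ × ℕ | p.2 ≤ p.1 ∧ (p.1 : ℝ) ^ 2 + (p.2 : ℝ) ^ 2 < lam ∧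
        (lam ≤ ((p.1 : ℝ) + 1) ^ 2 + (p.2 : ℝ) ^ 2 ∨ p.1 + 1 < p.2)}) :
    Set.BijOn (fun p : ℕ × ℕ => (p.1 - 1, p.2)) O (E \ (B ∩ E)) ∧
    O.ncard = E.ncard - (B ∩ E).ncard := by
  have hOsub : ∀ p ∈ O, 1 ≤ p.1 ∧ p.2 + 1 ≤ p.1 := by
    intro p hp
    rw [hO] at hp
    obtain ⟨h1, _, h3⟩ := hp
    have : p.1 ≠ p.2 := fun h => h3 (by rw [h])
    omega
  have hbij : Set.BijOn (fun p : ℕ × ℕ => (p.1 - 1, p.2)) O (E \ (B ∩ E)) := by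
    refine ⟨?_, ?_, ?_⟩
    · intro p hp
      obtain ⟨hm1, hm2⟩ := hOsub p hp
      rw [hO] at hp
      obtain ⟨h1, h2, h3⟩ := hp
      have hc : ((p.1 - 1 : ℕ) : ℝ) = (p.1 : ℝ) - 1 := by
        push_cast [Nat.cast_sub hm1]; ring
      have h1R : (1 : ℝ) ≤ (p.1 : ℝ) := by exact_mod_cast hm1
      simp only [Set.mem_diff, Set.mem_inter_iff, hE, hB, Set.mem_setOf_eq, hc, not_and,
        not_or, not_le, not_lt]
      refine ⟨⟨by omega, by nlinarith, by omega⟩, ?_⟩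
      rintro ⟨-, -, hb3⟩
      rcases hb3 with hb3 | hb3
      · nlinarith
      · omega
    · intro a ha b hb h
      have h1 := hOsub a ha
      have h2 := hOsub b hb
      rw [Prod.ext_iff] at h ⊢
      simp only at h
      omega
    · intro p hp
      obtain ⟨hpE, hpnB⟩ := hp
      have hE' := hpE
      rw [hE] at hE'
      obtain ⟨h1, h2, h3⟩ := hE'
      have hnB : p ∉ B := fun h => hpnB ⟨h, hpE⟩
      rw [hB] at hnB
      simp only [Set.mem_setOf_eq, not_and, not_or, not_le, not_lt] at hnB
      obtain ⟨hb1, hb2⟩ := hnB h1 h2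
      refine ⟨(p.1 + 1, p.2), ?_, ?_⟩
      · rw [hO]
        refine ⟨by omega, ?_, by omega⟩
        push_cast
        linarith
      · simp
  refine ⟨hbij, ?_⟩
  have hfinE : E.Finite := by
    have hsub : E ⊆ Set.Iic (⌈lam⌉₊) ×ˢ Set.Iic (⌈lam⌉₊) := by
      intro p hp
      rw [hE] at hp
      obtain ⟨h1, h2, -⟩ := hp
      have key : ∀ m : ℕ, (m : ℝ) ^ 2 < lam → m ∈ Set.Iic (⌈lam⌉₊) := by
        intro m hm
        have hm1 : (m : ℝ) ≤ (m : ℝ) ^ 2 := by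
          have := Nat.le_self_pow (two_ne_zero) m
          exact_mod_cast this
        have : (m : ℝ) < lam := lt_of_le_of_lt hm1 hm
        exact le_of_lt (Nat.lt_ceil.mpr this)
      constructor
      · exact key p.1 (by nlinarith [sq_nonneg (p.2 : ℝ)])
      · exact key p.2 (by nlinarith [sq_nonneg (p.1 : ℝ)])
    exact Set.Finite.subset ((Set.finite_Iic _).prod (Set.finite_Iic _)) hsub
  have himg := hbij.image_eq
  have hinj := hbij.injOn
  have hcard1 : O.ncard = (E \ (B ∩ E)).ncard := by
    rw [← himg, Set.ncard_image_of_injOn hinj]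
  rw [hcard1, Set.ncard_diff Set.inter_subset_right (hfinE.subset Set.inter_subset_right)]
end

section
/- Let n ≥ 2 and γ = 2^{1/n}. Every nonzero eigenvalue λ = Σ_{j=1}^n (γ^{j−1} m_j)² with m⃗ ∈ ℕ₀ⁿ can be written as λ = γ^{2k} λ₀ for some k ∈ ℕ₀ and some m⃗' ∈ ℕ₀ⁿ with odd first coordinate m'₁ such that λ₀ = Σ_{j=1}^n (γ^{j−1} m'_j)², and this representation (k, λ₀) is unique. -/
/-!
Multiplication by `γ²` acts on index vectors: every coordinate moves up by one and the last one
wraps around to the front, doubled (as `γ ^ (2 * n) = 4`). Peeling off factors `γ²` while the first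
coordinate is even terminates, since nonzero eigenvalues are at least `1`. For uniqueness,
`X ^ n - 2` is Eisenstein at `2`, so an integer relation `∑ dⱼ γ ^ (2 * j) = 0` forces `d₀` to be
even: the parity of the first coordinate is determined by the eigenvalue, while `γ ^ (2 * d) * λ`
with `d ≥ 1` is always represented with an even first coordinate.
-/

open Finset Polynomial

theorem two_dvd_eval_zero_of_aeval_eq_zero {S : Type*} [CommRing S] [IsDomain S] [CharZero S]
    {n : ℕ} (hn : n ≠ 0) {γ : S} (hγ : γ ^ n = 2) {f : ℤ[X]} (hf : aeval γ f = 0) :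
    2 ∣ f.eval 0 := by
  have hmonic : (X ^ n - C 2 : ℤ[X]).Monic := monic_X_pow_sub_C _ hn
  have hirr : Irreducible (X ^ n - C 2 : ℤ[X]) := by
    refine (hmonic.isEisensteinAt_of_mem_of_notMem (𝓟 := Ideal.span {2}) ?_ ?_ ?_).irreducible
      ((Ideal.span_singleton_prime two_ne_zero).mpr Int.prime_two) hmonic.isPrimitive
      (by rw [natDegree_X_pow_sub_C]; omega)
    · rw [Ne, Ideal.span_singleton_eq_top]; exact Int.prime_two.not_isUnit
    · intro i hi
      rw [natDegree_X_pow_sub_C] at hi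
      rw [coeff_sub, coeff_X_pow, coeff_C]
      simp only [hi.ne, if_false, zero_sub, Ideal.mem_span_singleton, dvd_neg]
      split_ifs <;> simp
    · simp [Ne.symm hn, Ideal.span_singleton_pow, Ideal.mem_span_singleton]
  have hroot : aeval γ (X ^ n - C 2 : ℤ[X]) = 0 := by
    rw [map_sub, map_pow, aeval_X, aeval_C, hγ]; simp
  have hint : IsIntegral ℤ γ := ⟨_, hmonic, hroot⟩
  have hdvd : X ^ n - C 2 ∣ f :=
    ((minpoly.irreducible hint).dvd_symm hirr (minpoly.isIntegrallyClosed_dvd hint hroot)).trans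
      (minpoly.isIntegrallyClosed_dvd hint hf)
  obtain ⟨q, rfl⟩ := hdvd
  simp [zero_pow hn]

def boxEigenvalue (γ : ℝ) (n : ℕ) (m : ℕ → ℕ) : ℝ :=
  ∑ j ∈ range n, (γ ^ j * (m j : ℝ)) ^ 2

noncomputable def eigenPoly (n : ℕ) (m : ℕ → ℕ) : ℤ[X] :=
  ∑ j ∈ range n, C ((m j : ℤ) ^ 2) * X ^ (2 * j)

def rotateDouble (n : ℕ) (m : ℕ → ℕ) : ℕ → ℕ :=
  fun j => if j = 0 then 2 * m (n - 1) else m (j - 1)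

section

variable {γ : ℝ} {n : ℕ}

theorem aeval_eigenPoly (m : ℕ → ℕ) : aeval γ (eigenPoly n m) = boxEigenvalue γ n m := by
  simp only [eigenPoly, boxEigenvalue, map_sum]
  refine sum_congr rfl fun j _ => ?_
  simp only [map_mul, map_pow, map_natCast, aeval_X]
  ring

theorem eval_zero_eigenPoly (hn : n ≠ 0) (m : ℕ → ℕ) : (eigenPoly n m).eval 0 = (m 0 : ℤ) ^ 2 := by
  rw [eigenPoly, eval_finsetSum, sum_eq_single_of_mem 0 (mem_range.mpr (Nat.pos_of_ne_zero hn))]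
  · simp
  · intro j _ hj
    simp [hj]

theorem odd_of_boxEigenvalue_eq (hn : n ≠ 0) (hγ : γ ^ n = 2) {a b : ℕ → ℕ}
    (h : boxEigenvalue γ n a = boxEigenvalue γ n b) (ha : Odd (a 0)) : Odd (b 0) := by
  have hdvd := two_dvd_eval_zero_of_aeval_eq_zero hn hγ (f := eigenPoly n a - eigenPoly n b)
    (by rw [map_sub, aeval_eigenPoly, aeval_eigenPoly, h, sub_self])
  rw [eval_sub, eval_zero_eigenPoly hn, eval_zero_eigenPoly hn, ← even_iff_two_dvd] at hdvd
  have hpar := Int.even_sub.mp hdvd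
  simp only [Int.even_pow' two_ne_zero, Int.even_coe_nat] at hpar
  rw [← Nat.not_even_iff_odd] at ha ⊢
  rwa [← hpar]

theorem sq_mul_boxEigenvalue (hn : n ≠ 0) (hγ : γ ^ n = 2) (m : ℕ → ℕ) :
    γ ^ 2 * boxEigenvalue γ n m = boxEigenvalue γ n (rotateDouble n m) := by
  obtain ⟨n, rfl⟩ := Nat.exists_eq_add_one_of_ne_zero hn
  rw [boxEigenvalue, boxEigenvalue, sum_range_succ, sum_range_succ', mul_add, mul_sum]
  congr 1
  · refine sum_congr rfl fun j _ => ?_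
    simp only [rotateDouble, Nat.add_one_ne_zero, if_false, Nat.add_sub_cancel]
    ring
  · simp only [rotateDouble, if_true, Nat.add_sub_cancel]
    push_cast
    rw [← hγ]
    ring

theorem pow_mul_boxEigenvalue (hn : n ≠ 0) (hγ : γ ^ n = 2) (k : ℕ) (m : ℕ → ℕ) :
    γ ^ (2 * k) * boxEigenvalue γ n m = boxEigenvalue γ n ((rotateDouble n)^[k] m) := by
  induction k with
  | zero => simp
  | succ k ih =>
    rw [Function.iterate_succ_apply', ← sq_mul_boxEigenvalue hn hγ, ← ih, mul_add, pow_add]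
    ring

theorem exists_sq_mul_of_even (hn : n ≠ 0) (hγ : γ ^ n = 2) {m : ℕ → ℕ} (hm : Even (m 0)) :
    ∃ m', boxEigenvalue γ n m = γ ^ 2 * boxEigenvalue γ n m' := by
  obtain ⟨u, hu⟩ := hm
  refine ⟨fun j => if j = n - 1 then u else m (j + 1), ?_⟩
  rw [sq_mul_boxEigenvalue hn hγ]
  refine sum_congr rfl fun j hj => ?_
  rw [mem_range] at hj
  rcases eq_or_ne j 0 with rfl | hj0
  · simp [rotateDouble, hu, two_mul]
  · simp [rotateDouble, hj0, show j - 1 ≠ n - 1 by omega,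
      Nat.sub_add_cancel (Nat.one_le_iff_ne_zero.mpr hj0)]

theorem one_le_boxEigenvalue (hγ : 1 ≤ γ) {m : ℕ → ℕ} (hm : boxEigenvalue γ n m ≠ 0) :
    1 ≤ boxEigenvalue γ n m := by
  obtain ⟨j, hj, hmj⟩ : ∃ j ∈ range n, m j ≠ 0 := by
    by_contra! h
    exact hm (sum_eq_zero fun j hj => by simp [h j hj])
  calc 1 ≤ (γ ^ j * (m j : ℝ)) ^ 2 :=
        one_le_pow₀ (one_le_mul_of_one_le_of_one_le (one_le_pow₀ hγ)
          (by exact_mod_cast Nat.one_le_iff_ne_zero.mpr hmj))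
    _ ≤ boxEigenvalue γ n m :=
        single_le_sum (f := fun i => (γ ^ i * (m i : ℝ)) ^ 2) (fun i _ => sq_nonneg _) hj

theorem exists_odd_factorization (hn : n ≠ 0) (hγ : γ ^ n = 2) (hγ1 : 1 < γ) {m : ℕ → ℕ}
    (hm : boxEigenvalue γ n m ≠ 0) :
    ∃ k m', Odd (m' 0) ∧ boxEigenvalue γ n m = γ ^ (2 * k) * boxEigenvalue γ n m' := by
  obtain ⟨K, hK⟩ := pow_unbounded_of_one_lt (boxEigenvalue γ n m) (one_lt_pow₀ hγ1 two_ne_zero)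
  induction K generalizing m with
  | zero => exact absurd (one_le_boxEigenvalue hγ1.le hm) (by simpa using hK)
  | succ K ih =>
    rcases Nat.even_or_odd (m 0) with heven | hodd
    · obtain ⟨m', hm'⟩ := exists_sq_mul_of_even hn hγ heven
      rw [hm'] at hm hK
      obtain ⟨k, m'', hodd, h⟩ := ih (right_ne_zero_of_mul hm)
        (lt_of_mul_lt_mul_left (by rwa [pow_succ' (γ ^ 2)] at hK) (by positivity))
      exact ⟨k + 1, m'', hodd, by rw [hm', h, mul_add, pow_add]; ring⟩
    · exact ⟨0, m, hodd, by simp⟩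

theorem eq_of_odd_factorization (hn : n ≠ 0) (hγ : γ ^ n = 2) (hγ0 : 0 < γ) {k k' : ℕ}
    {a b : ℕ → ℕ} (ha : Odd (a 0)) (hb : Odd (b 0))
    (h : γ ^ (2 * k) * boxEigenvalue γ n a = γ ^ (2 * k') * boxEigenvalue γ n b) : k = k' := by
  wlog hk : k ≤ k' generalizing k k' a b
  · exact (this hb ha h.symm (by omega)).symm
  obtain ⟨d, rfl⟩ := Nat.exists_eq_add_of_le hk
  rw [mul_add, pow_add, mul_assoc] at h
  have h' := mul_left_cancel₀ (by positivity) h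
  cases d with
  | zero => rfl
  | succ d =>
    rw [mul_add, pow_add, mul_one, mul_comm (γ ^ (2 * d)), mul_assoc, pow_mul_boxEigenvalue hn hγ,
      sq_mul_boxEigenvalue hn hγ] at h'
    exact absurd (odd_of_boxEigenvalue_eq hn hγ h' ha) (Nat.not_odd_iff_even.mpr (even_two_mul _))

end

theorem stmt13_general (n : ℕ) (γ : ℝ) (hγ : γ = (2 : ℝ) ^ ((1 : ℝ) / n))
    (m : ℕ → ℕ)
    (hne : (∑ j ∈ Finset.range n, (γ ^ j * (m j : ℝ)) ^ 2) ≠ 0) :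
    ∃ k : ℕ, ∃ lam0 : ℝ,
      (∃ m' : ℕ → ℕ, Odd (m' 0) ∧
        lam0 = ∑ j ∈ Finset.range n, (γ ^ j * (m' j : ℝ)) ^ 2) ∧
      (∑ j ∈ Finset.range n, (γ ^ j * (m j : ℝ)) ^ 2) = γ ^ (2 * k) * lam0 ∧
      ∀ k' : ℕ, ∀ lam0' : ℝ,
        (∃ m' : ℕ → ℕ, Odd (m' 0) ∧
          lam0' = ∑ j ∈ Finset.range n, (γ ^ j * (m' j : ℝ)) ^ 2) →
        (∑ j ∈ Finset.range n, (γ ^ j * (m j : ℝ)) ^ 2) = γ ^ (2 * k') * lam0' →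
        k' = k ∧ lam0' = lam0 := by
  have hn : n ≠ 0 := by rintro rfl; simp at hne
  have hγn : γ ^ n = 2 := by rw [hγ, one_div, Real.rpow_inv_natCast_pow zero_le_two hn]
  have hγ1 : 1 < γ := hγ ▸ Real.one_lt_rpow one_lt_two (by positivity)
  obtain ⟨k, m', hodd, hm⟩ := exists_odd_factorization hn hγn hγ1 hne
  refine ⟨k, _, ⟨m', hodd, rfl⟩, hm, ?_⟩
  rintro k' _ ⟨b, hb, rfl⟩ hb'
  have h := hm.symm.trans hb'
  obtain rfl := eq_of_odd_factorization hn hγn (by positivity) hodd hb h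
  exact ⟨rfl, (mul_left_cancel₀ (by positivity) h).symm⟩

theorem stmt13 (n : ℕ) (hn : 2 ≤ n) (γ : ℝ) (hγ : γ = (2 : ℝ) ^ ((1 : ℝ) / n))
    (m : ℕ → ℕ)
    (hne : (∑ j ∈ Finset.range n, (γ ^ j * (m j : ℝ)) ^ 2) ≠ 0) :
    ∃ k : ℕ, ∃ lam0 : ℝ,
      (∃ m' : ℕ → ℕ, Odd (m' 0) ∧
        lam0 = ∑ j ∈ Finset.range n, (γ ^ j * (m' j : ℝ)) ^ 2) ∧
      (∑ j ∈ Finset.range n, (γ ^ j * (m j : ℝ)) ^ 2) = γ ^ (2 * k) * lam0 ∧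
      ∀ k' : ℕ, ∀ lam0' : ℝ,
        (∃ m' : ℕ → ℕ, Odd (m' 0) ∧
          lam0' = ∑ j ∈ Finset.range n, (γ ^ j * (m' j : ℝ)) ^ 2) →
        (∑ j ∈ Finset.range n, (γ ^ j * (m j : ℝ)) ^ 2) = γ ^ (2 * k') * lam0' →
        k' = k ∧ lam0' = lam0 :=
  stmt13_general n γ hγ m hne
end

section
/- Let n ≥ 3 be odd and γ = 2^{1/n}. If m⃗, m⃗' ∈ ℕ₀ⁿ satisfy Σ_{j=1}^n γ^{2(j−1)} m_j² = Σ_{j=1}^n γ^{2(j−1)} (m'_j)², then m⃗ = m⃗'. In other words, all Neumann eigenvalues of the n-dimensional 2-rep-tile box are simple when n is odd. -/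
open Finset Polynomial

lemma aux_no_rat_root (p : ℕ) (hp : p.Prime) (b : ℚ) : b ^ p ≠ 2 := by
  intro hb
  haveI : Fact (Nat.Prime 2) := ⟨Nat.prime_two⟩
  have h2 : ((b : ℝ)) ^ p = ((2 : ℤ) : ℝ) := by rw [← Rat.cast_pow, hb]; norm_num
  have hirr : Irrational ((b : ℝ)) := by
    refine irrational_nrt_of_n_not_dvd_multiplicity p (by norm_num) 2 h2 ?_
    rw [show ((2:ℕ):ℤ) = (2:ℤ) by norm_num, multiplicity_self]
    simpa using hp.ne_one
  exact (Rat.not_irrational b) hirr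

theorem stmt14 (n : ℕ) (hn : 3 ≤ n) (hodd : Odd n) (γ : ℝ)
    (hγ : γ = (2 : ℝ) ^ ((1 : ℝ) / n)) (m m' : ℕ → ℕ)
    (heq : ∑ j ∈ Finset.range n, γ ^ (2 * j) * (m j : ℝ) ^ 2
        = ∑ j ∈ Finset.range n, γ ^ (2 * j) * (m' j : ℝ) ^ 2) :
    ∀ j < n, m j = m' j := by
  have hnpos : 0 < n := by omega
  have hnR : (n : ℝ) ≠ 0 := Nat.cast_ne_zero.mpr hnpos.ne'
  -- γ ^ n = 2
  have hγpow : γ ^ n = 2 := by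
    rw [hγ, ← Real.rpow_natCast ((2:ℝ) ^ ((1:ℝ)/n)) n, ← Real.rpow_mul (by norm_num)]
    rw [one_div, inv_mul_cancel₀ hnR, Real.rpow_one]
  -- X^n - 2 is irreducible over ℚ
  have hirr : Irreducible ((X : ℚ[X]) ^ n - C (2:ℚ)) :=
    X_pow_sub_C_irreducible_of_odd hodd (fun p hp _ b => aux_no_rat_root p hp b)
  -- γ is a root
  have hroot : (aeval γ) ((X : ℚ[X]) ^ n - C (2:ℚ)) = 0 := by
    simp [hγpow]
  have hmin : minpoly ℚ γ = (X : ℚ[X]) ^ n - C (2:ℚ) :=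
    (minpoly.eq_of_irreducible_of_monic hirr hroot (monic_X_pow_sub_C _ hnpos.ne')).symm
  -- injectivity of j ↦ 2*j % n on range n
  have hcop : Nat.Coprime 2 n := hodd.coprime_two_left
  have hinj : ∀ j < n, ∀ j' < n, 2 * j % n = 2 * j' % n → j = j' := by
    intro j hj j' hj' h
    have : j ≡ j' [MOD n] :=
      Nat.ModEq.cancel_left_of_coprime (by simpa using hcop) h
    have := this.eq_of_lt_of_lt hj hj'
    exact this
  -- coefficients
  set a : ℕ → ℚ := fun j => (2:ℚ) ^ (2 * j / n) * ((m j : ℚ) ^ 2 - (m' j : ℚ) ^ 2) with ha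
  set q : ℚ[X] := ∑ j ∈ range n, C (a j) * X ^ (2 * j % n) with hqdef
  have key : ∀ j : ℕ, γ ^ (2 * j) = 2 ^ (2 * j / n) * γ ^ (2 * j % n) := by
    intro j
    conv_lhs => rw [← Nat.div_add_mod (2 * j) n]
    rw [pow_add, pow_mul, hγpow]
  have haeval : (aeval γ) q = 0 := by
    rw [hqdef, map_sum]
    have hterm : ∀ j ∈ range n,
        (aeval γ) (C (a j) * X ^ (2 * j % n))
          = γ ^ (2 * j) * (m j : ℝ) ^ 2 - γ ^ (2 * j) * (m' j : ℝ) ^ 2 := by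
      intro j _
      rw [map_mul, map_pow, aeval_X, aeval_C, key j, ha]
      push_cast
      norm_num
      ring
    rw [Finset.sum_congr rfl hterm, Finset.sum_sub_distrib, heq, sub_self]
  -- q = 0
  have hq0 : q = 0 := by
    by_contra hq
    have h1 : (minpoly ℚ γ).degree ≤ q.degree :=
      minpoly.degree_le_of_ne_zero ℚ γ hq haeval
    have h2 : q.degree < (n : WithBot ℕ) := by
      refine lt_of_le_of_lt (degree_sum_le _ _) ?_
      rw [Finset.sup_lt_iff (by exact_mod_cast WithBot.bot_lt_coe n)]
      intro j _
      exact lt_of_le_of_lt (degree_C_mul_X_pow_le _ _)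
        (by exact_mod_cast Nat.mod_lt _ hnpos)
    rw [hmin, degree_X_pow_sub_C hnpos] at h1
    exact absurd (lt_of_le_of_lt h1 h2) (lt_irrefl _)
  -- extract coefficients
  intro j hj
  have hc : q.coeff (2 * j % n) = a j := by
    rw [hqdef, finset_sum_coeff,
      Finset.sum_eq_single_of_mem j (mem_range.mpr hj)]
    · simp [coeff_C_mul, coeff_X_pow]
    · intro b hb hbj
      have : 2 * j % n ≠ 2 * b % n := fun h =>
        hbj (hinj b (mem_range.mp hb) j hj h.symm)
      simp [coeff_C_mul, coeff_X_pow, this]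
  rw [hq0, coeff_zero] at hc
  have h2ne : (2:ℚ) ^ (2 * j / n) ≠ 0 := pow_ne_zero _ (by norm_num)
  have hsq : (m j : ℚ) ^ 2 = (m' j : ℚ) ^ 2 := by
    have := mul_eq_zero.mp hc.symm
    rcases this with h | h
    · exact absurd h h2ne
    · linarith [sub_eq_zero.mp h]
  have : (m j) ^ 2 = (m' j) ^ 2 := by exact_mod_cast hsq
  exact Nat.pow_left_injective (by norm_num) this
end

section
/- Let n ≥ 2, γ = 2^{1/n}, and let m⃗ = (m₁, …, m₁) ∈ ℕⁿ be a constant vector. Then (m₁+1)² < m₁² · (γ²ⁿ − 1)/(γ² − 1) = m₁² · Σ_{j=1}^n γ^{2(j−1)}, except when n = 2 and m₁ = 1, or m₁ = 0. Equivalently, λ_{(m₁+1,0,…,0)} < λ_{(m₁,…,m₁)} for those cases. -/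
open Finset

theorem stmt16 (n : ℕ) (hn : 2 ≤ n) (γ : ℝ) (hγ : γ = (2 : ℝ) ^ ((1 : ℝ) / n))
    (m₁ : ℕ) (hm₁ : 1 ≤ m₁) (hexc : ¬(n = 2 ∧ m₁ = 1)) :
    (m₁ : ℝ) ^ 2 * ∑ j ∈ Finset.range n, γ ^ (2 * j)
        = (m₁ : ℝ) ^ 2 * (γ ^ (2 * n) - 1) / (γ ^ 2 - 1) ∧
    ((m₁ : ℝ) + 1) ^ 2 < (m₁ : ℝ) ^ 2 * ∑ j ∈ Finset.range n, γ ^ (2 * j) := by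
  have hn0 : (n : ℝ) ≠ 0 := by positivity
  have hnpos : (0:ℝ) < n := by positivity
  have h1γ : (1:ℝ) < γ := by
    rw [hγ]
    apply Real.one_lt_rpow_iff_of_pos (by norm_num) |>.2
    left
    constructor
    · norm_num
    · positivity
  have hγ2 : γ ^ 2 = (2:ℝ) ^ ((2:ℝ)/n) := by
    rw [hγ, ← Real.rpow_natCast ((2:ℝ) ^ ((1:ℝ)/n)) 2, ← Real.rpow_mul (by norm_num)]
    norm_num
    rw [inv_mul_eq_div]
  have hγ2n : γ ^ (2*n) = 4 := by
    rw [hγ, ← Real.rpow_natCast ((2:ℝ) ^ ((1:ℝ)/n)) (2*n), ← Real.rpow_mul (by norm_num)]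
    have : (1:ℝ)/n * (2*n : ℕ) = 2 := by
      push_cast
      field_simp
    rw [this]
    norm_num
  have hd : 0 < γ ^ 2 - 1 := by nlinarith
  have hsum : ∑ j ∈ Finset.range n, γ ^ (2 * j) = (γ ^ (2*n) - 1) / (γ ^ 2 - 1) := by
    have hne : γ ^ 2 ≠ 1 := by nlinarith
    have := geom_sum_eq hne n
    simp only [← pow_mul] at this
    exact this
  constructor
  · rw [hsum, mul_div_assoc]
  · rw [hsum, hγ2n]
    have hm : (1:ℝ) ≤ m₁ := by exact_mod_cast hm₁
    rw [show ((4:ℝ)-1) = 3 by norm_num, mul_div_assoc' , lt_div_iff₀ hd]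
    rcases Nat.lt_or_ge m₁ 2 with h | h
    · -- m₁ = 1, so n ≥ 3
      have hm1 : m₁ = 1 := le_antisymm (by omega) hm₁
      have hn3 : 3 ≤ n := by
        rcases Nat.lt_or_ge n 3 with h' | h'
        · exfalso; exact hexc ⟨by omega, hm1⟩
        · exact h'
      have hle : γ ^ 2 ≤ (2:ℝ) ^ ((2:ℝ)/3) := by
        rw [hγ2]
        apply Real.rpow_le_rpow_of_exponent_le (by norm_num)
        rw [div_le_div_iff₀ hnpos (by norm_num)]
        have : (3:ℝ) ≤ n := by exact_mod_cast hn3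
        linarith
      have hcube : ((2:ℝ) ^ ((2:ℝ)/3)) ^ (3:ℕ) = 4 := by
        rw [← Real.rpow_natCast ((2:ℝ) ^ ((2:ℝ)/3)) 3, ← Real.rpow_mul (by norm_num)]
        norm_num
      have h74 : (2:ℝ) ^ ((2:ℝ)/3) < 7/4 := by
        apply lt_of_pow_lt_pow_left₀ 3 (by norm_num)
        rw [hcube]
        norm_num
      rw [hm1]
      push_cast
      nlinarith
    · have hm2 : (2:ℝ) ≤ m₁ := by exact_mod_cast h
      have hle2 : γ ^ 2 ≤ 2 := by
        rw [hγ2]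
        calc (2:ℝ) ^ ((2:ℝ)/n) ≤ (2:ℝ) ^ ((1:ℝ)) := by
              apply Real.rpow_le_rpow_of_exponent_le (by norm_num)
              rw [div_le_one hnpos]
              have : (2:ℝ) ≤ n := by exact_mod_cast hn
              linarith
          _ = 2 := by norm_num
      nlinarith
end
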